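/- Let z ∈ F_∞ and n a positive integer. The following are equivalent: (a) the set of FPF-visible descents of z is exactly {n}; (b) the FPF-involution code ĉ_FPF(z) has the form (0, c₂, …, c_n, 0, 0, …) where c₂ ≤ c₃ ≤ ⋯ ≤ c_n and c_n ≠ 0; (c) the essential set Ess(D̂_FPF(z)) is nonempty and contained in {(n,j) : j a positive integer}; (d) β_min(z) is n-Grassmannian. -/

import Mathlib

open Equiv

noncomputable section

/-- The function underlying the permutation `Θ : i ↦ i - (-1)^i` of `ℤ`. -/
def thetaFun (i : ℤ) : ℤ := if Even i then i - 1 else i + 1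

theorem thetaFun_invol : Function.Involutive thetaFun := by
  intro i
  unfold thetaFun
  by_cases h : Even i
  · have h1 : ¬ Even (i - 1) := by simp [Int.even_sub_one, h]
    simp [h, h1]
  · have h1 : Even (i + 1) := Int.even_add_one.mpr h
    simp [h, h1]

/-- The permutation `Θ` of `ℤ`, interchanging `2k-1` and `2k` for every integer `k`. -/
def Theta : Equiv.Perm ℤ := thetaFun_invol.toPerm

/-- `F_ℤ`: the fixed-point-free involutions of `ℤ` agreeing with `Θ` outside a finite set. -/
def FZ : Set (Equiv.Perm ℤ) :=
  {z | z * z = 1 ∧ (∀ i : ℤ, z i ≠ i) ∧ {i : ℤ | z i ≠ Theta i}.Finite}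

/-- The set of inversions `Inv(w) = {(i,j) : i < j, w(i) > w(j)}`. -/
def InvSet (w : Equiv.Perm ℤ) : Set (ℤ × ℤ) := {p | p.1 < p.2 ∧ w p.2 < w p.1}

/-- `Cyc_ℤ(w) = {(i,j) : i < j, w(i) = j}`. -/
def CycSet (w : Equiv.Perm ℤ) : Set (ℤ × ℤ) := {p | p.1 < p.2 ∧ w p.1 = p.2}

/-- `ℓ̂_FPF(w) = |Inv(w) ∖ Cyc_ℤ(w)| / 2`. -/
def fpfLen (w : Equiv.Perm ℤ) : ℕ := ((InvSet w) \ (CycSet w)).ncard / 2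

/-- `(i,j)` is an FPF-visible inversion of `z`: `i < j` and `z(j) < min{i, z(i)}`. -/
def FpfVisInv (z : Equiv.Perm ℤ) (i j : ℤ) : Prop := i < j ∧ z j < min i (z i)

/-- `i` is an FPF-visible descent of `z`. -/
def FpfVisDes (z : Equiv.Perm ℤ) (i : ℤ) : Prop := FpfVisInv z i (i + 1)

/-- `i` is a visible descent of an involution `f` of `ℤ`: `f(i+1) ≤ min{i, f(i)}`. -/
def VisDes (f : ℤ → ℤ) (i : ℤ) : Prop := f (i + 1) ≤ min i (f i)

/-- `(q,r)` is the lexicographically maximal FPF-visible inversion of `z`. -/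
def IsMaxVisInv (z : Equiv.Perm ℤ) (q r : ℤ) : Prop :=
  FpfVisInv z q r ∧ ∀ a b : ℤ, FpfVisInv z a b → a < q ∨ (a = q ∧ b ≤ r)

/-- `S_∞`: permutations of `ℤ` whose support is a finite set of positive integers. -/
def SInf : Set (Equiv.Perm ℤ) := {w | {i : ℤ | w i ≠ i}.Finite ∧ ∀ i : ℤ, w i ≠ i → 0 < i}

/-- The Coxeter length of `w ∈ S_∞`: the number of inversions. -/
def lenZ (w : Equiv.Perm ℤ) : ℕ := (InvSet w).ncard

/-- `F_∞`: the elements of `F_ℤ` agreeing with `Θ` on all `i ≤ 0`. -/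
def FInf : Set (Equiv.Perm ℤ) := {z | z ∈ FZ ∧ ∀ i : ℤ, i ≤ 0 → z i = Theta i}

/-- `A_FPF(z)`: the elements `w ∈ S_∞` of minimal Coxeter length with `z = w⁻¹ Θ w`. -/
def AFPF (z : Equiv.Perm ℤ) : Set (Equiv.Perm ℤ) :=
  {w | w ∈ SInf ∧ z = w⁻¹ * Theta * w ∧
    ∀ v ∈ SInf, z = v⁻¹ * Theta * v → lenZ w ≤ lenZ v}

/-- `w = β_min(z)`: `w ∈ A_FPF(z)` and the one-line sequence `(w(1), w(2), …)` of `w`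
is lexicographically minimal among elements of `A_FPF(z)`. -/
def IsLexMinAtom (z w : Equiv.Perm ℤ) : Prop :=
  w ∈ AFPF z ∧ ∀ v ∈ AFPF z, v = w ∨
    ∃ k : ℤ, 0 < k ∧ w k < v k ∧ ∀ j : ℤ, 0 < j → j < k → w j = v j

/-- The FPF-involution diagram `D̂_FPF(z) = {(i,j) : 0 < j, j < i < z(j), j < z(i)}`. -/
def DhatFPF (z : Equiv.Perm ℤ) : Set (ℤ × ℤ) :=
  {p | 0 < p.2 ∧ p.2 < p.1 ∧ p.1 < z p.2 ∧ p.2 < z p.1}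

/-- The `i`-th entry of the FPF-involution code: the number of positions in row `i`
of `D̂_FPF(z)`. -/
def fpfCode (z : Equiv.Perm ℤ) (i : ℤ) : ℕ := {j : ℤ | (i, j) ∈ DhatFPF z}.ncard

/-- The essential set of a diagram `D`. -/
def EssSet (D : Set (ℤ × ℤ)) : Set (ℤ × ℤ) :=
  {p | p ∈ D ∧ (p.1 + 1, p.2) ∉ D ∧ (p.1, p.2 + 1) ∉ D}

/-- `w` is `n`-Grassmannian: its unique descent (among positive positions) is at `n`. -/
def IsNGrassmannian (n : ℤ) (w : Equiv.Perm ℤ) : Prop :=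
  (∀ i : ℤ, 0 < i → i ≠ n → w i < w (i + 1)) ∧ w (n + 1) < w n


/-!
Write `cycMin z i = min(i, z i)`. Then `i` is an FPF-visible descent iff
`cycMin z (i+1) < cycMin z i`, and row `i` of `D̂_FPF(z)` is `{j > 0 | j < cycMin z i, i < z j}`.
So a row is contained in the next one unless `i` is a descent, in which case the next row loses
`z(i+1)` and everything to its right, and all rows after the last descent are empty. This gives
(a) ⇔ (b), and shows that the rows meeting the essential set are exactly the descents, whence
(a) ⇔ (c).

For (d), `β_min(z)` is explicit: it numbers the cycles of `z` by increasing minimum and sends the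
`k`-th one to `{2k+1, 2k+2}`. It compares positive `x, y` as the pairs `(cycMin z x, x)` and
`(cycMin z y, y)` lexicographically, so its descents are those of `z`.
-/

namespace Theta

lemma apply_eq (x : ℤ) : Theta x = if Even x then x - 1 else x + 1 := rfl

lemma apply_of_even {x : ℤ} (h : Even x) : Theta x = x - 1 := by
  rw [apply_eq, if_pos h]

lemma apply_of_odd {x : ℤ} (h : ¬Even x) : Theta x = x + 1 := by
  rw [apply_eq, if_neg h]

lemma sub_one_le (x : ℤ) : x - 1 ≤ Theta x := by
  rw [apply_eq]; split_ifs <;> omega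

lemma apply_nonpos {x : ℤ} (h : x ≤ 0) : Theta x ≤ 0 := by
  rcases Int.even_or_odd x with hx | ⟨k, rfl⟩
  · rw [apply_of_even hx]; omega
  · rw [apply_of_odd (Int.not_even_iff_odd.2 ⟨k, rfl⟩)]; omega

lemma apply_two_mul_add_one (k : ℤ) : Theta (2 * k + 1) = 2 * k + 2 := by
  rw [apply_of_odd (Int.not_even_iff_odd.2 ⟨k, rfl⟩)]; ring

lemma apply_two_mul_add_two (k : ℤ) : Theta (2 * k + 2) = 2 * k + 1 := by
  rw [apply_of_even ⟨k + 1, by ring⟩]; ring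

end Theta

lemma apply_apply_of_eq_conj {z v : Perm ℤ} (h : z = v⁻¹ * Theta * v) (x : ℤ) :
    v (z x) = Theta (v x) := by
  rw [h]; simp [Perm.mul_apply]

namespace SInf

variable {v : Perm ℤ} (hv : v ∈ SInf)
include hv

lemma apply_of_nonpos {x : ℤ} (hx : x ≤ 0) : v x = x := by
  by_contra h
  exact (hv.2 x h).not_ge hx

lemma apply_pos {x : ℤ} (hx : 0 < x) : 0 < v x := by
  by_contra! h
  have := v.injective (apply_of_nonpos hv h)
  omega

lemma invSet_finite : (InvSet v).Finite := by
  obtain ⟨C, hC⟩ := hv.1.bddAbove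
  have hfix : ∀ x, C < x → v x = x := fun x hx => by
    by_contra h
    exact (hC h).not_gt hx
  refine ((Set.finite_Icc 1 C).prod (Set.finite_Icc 1 C)).subset ?_
  rintro ⟨p, q⟩ ⟨hpq, hinv⟩
  dsimp only at hpq hinv
  have hp : 0 < p := by
    by_contra! hp
    rw [apply_of_nonpos hv hp] at hinv
    rcases le_or_gt q 0 with hq | hq
    · rw [apply_of_nonpos hv hq] at hinv; omega
    · have := apply_pos hv hq; omega
  have hq : q ≤ C := by
    by_contra! hq
    rw [hfix q hq] at hinv
    have hvp : v p = p := v.injective (hfix _ (hq.trans hinv))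
    omega
  simp only [Set.mem_prod, Set.mem_Icc]
  omega

end SInf

namespace FZ

variable {z : Perm ℤ} (hz : z ∈ FZ)
include hz

lemma apply_apply (x : ℤ) : z (z x) = x := by
  simpa using congrArg (· x) hz.1

lemma involutive : Function.Involutive z := apply_apply hz

lemma apply_ne (x : ℤ) : z x ≠ x := hz.2.1 x

lemma exists_apply_eq_Theta : ∃ B : ℕ, ∀ x : ℤ, B ≤ x → z x = Theta x := by
  obtain ⟨C, hC⟩ := hz.2.2.bddAbove
  refine ⟨(C + 1).toNat, fun x hx => ?_⟩
  by_contra h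
  have := hC h
  omega

lemma apply_le_of_even {B : ℕ} (hB : ∀ x : ℤ, B ≤ x → z x = Theta x) {N y : ℤ}
    (hBN : B ≤ N) (hN : Even N) (hyN : y ≤ N) : z y ≤ N := by
  by_contra! hzy
  have h := hB (z y) (by omega)
  rw [apply_apply hz] at h
  have := Theta.sub_one_le (z y)
  have hyN : y = N := by omega
  subst hyN
  have := hB y hBN
  rw [Theta.apply_of_even hN] at this
  omega

end FZ

namespace FInf

variable {z : Perm ℤ} (hz : z ∈ FInf)
include hz

lemma apply_of_nonpos {x : ℤ} (h : x ≤ 0) : z x = Theta x := hz.2 x h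

lemma apply_pos {x : ℤ} (h : 0 < x) : 0 < z x := by
  by_contra! hzx
  have := apply_of_nonpos hz hzx
  rw [FZ.apply_apply hz.1] at this
  have := Theta.apply_nonpos hzx
  omega

end FInf

def cycMin (z : Perm ℤ) (i : ℤ) : ℤ := min i (z i)

def fpfRow (z : Perm ℤ) (i : ℤ) : Set ℤ := {j | (i, j) ∈ DhatFPF z}

section Rows

variable {z : Perm ℤ} {i j : ℤ}

lemma fpfVisDes_iff_cycMin_lt : FpfVisDes z i ↔ cycMin z (i + 1) < cycMin z i := by
  simp only [FpfVisDes, FpfVisInv, cycMin]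
  omega

lemma cycMin_le_of_forall_not_fpfVisDes {r : ℤ} (hir : i ≤ r)
    (h : ∀ k, i ≤ k → ¬FpfVisDes z k) : cycMin z i ≤ cycMin z r := by
  induction r, hir using Int.leInduction with
  | base => exact le_rfl
  | succ r hir ih => exact ih.trans (not_lt.1 (fpfVisDes_iff_cycMin_lt.not.1 (h r hir)))

lemma mem_fpfRow : j ∈ fpfRow z i ↔ 0 < j ∧ j < cycMin z i ∧ i < z j := by
  simp only [fpfRow, DhatFPF, cycMin, Set.mem_ofPred_eq, lt_min_iff]
  tauto

lemma fpfRow_finite : (fpfRow z i).Finite :=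
  (Set.finite_Ioo 0 i).subset fun _ hj =>
    have hj := mem_fpfRow.1 hj
    ⟨hj.1, hj.2.1.trans_le (min_le_left _ _)⟩

lemma fpfRow_eq_empty_of_le_one (hi : i ≤ 1) : fpfRow z i = ∅ :=
  Set.eq_empty_of_forall_notMem fun j hj => by
    have := mem_fpfRow.1 hj
    simp only [cycMin] at this
    omega

lemma fpfRow_subset_succ (hz : Function.Involutive z) (h : ¬FpfVisDes z i) :
    fpfRow z i ⊆ fpfRow z (i + 1) := by
  intro j hj
  rw [fpfVisDes_iff_cycMin_lt, not_lt] at h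
  obtain ⟨hj0, hji, hzj⟩ := mem_fpfRow.1 hj
  have hzj' : z j ≠ i + 1 := fun he => by
    have : z (i + 1) = j := by rw [← he, hz]
    simp only [cycMin] at h hji
    omega
  exact mem_fpfRow.2 ⟨hj0, hji.trans_le h, by omega⟩

lemma fpfRow_succ_subset (h : FpfVisDes z i) :
    fpfRow z (i + 1) ⊆ fpfRow z i ∩ Set.Iio (z (i + 1)) := by
  intro j hj
  have hd := fpfVisDes_iff_cycMin_lt.1 h
  obtain ⟨hj0, hji, hzj⟩ := mem_fpfRow.1 hj
  simp only [cycMin] at hd hji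
  exact ⟨mem_fpfRow.2 ⟨hj0, by simp only [cycMin]; omega, by omega⟩,
    by simp only [Set.mem_Iio]; omega⟩

/-- Without descents from `i` on, `cycMin z` is monotone there, and an entry `j` of row `i` would
give `j < cycMin z i ≤ cycMin z (z j) ≤ j`. -/
lemma fpfRow_eq_empty_of_forall_not_fpfVisDes (hz : Function.Involutive z)
    (h : ∀ k, i ≤ k → ¬FpfVisDes z k) : fpfRow z i = ∅ :=
  Set.eq_empty_of_forall_notMem fun j hj => by
    obtain ⟨-, hji, hzj⟩ := mem_fpfRow.1 hj
    have := cycMin_le_of_forall_not_fpfVisDes hzj.le h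
    simp only [cycMin, hz j] at this hji
    omega

lemma fpfCode_le_succ (hz : Function.Involutive z) (h : ¬FpfVisDes z i) :
    fpfCode z i ≤ fpfCode z (i + 1) :=
  Set.ncard_le_ncard (fpfRow_subset_succ hz h) fpfRow_finite

lemma fpfCode_eq_zero_of_le_one (hi : i ≤ 1) : fpfCode z i = 0 := by
  rw [fpfCode, ← fpfRow, fpfRow_eq_empty_of_le_one hi, Set.ncard_empty]

lemma fpfCode_eq_zero_of_forall_not_fpfVisDes (hz : Function.Involutive z)
    (h : ∀ k, i ≤ k → ¬FpfVisDes z k) : fpfCode z i = 0 := by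
  rw [fpfCode, ← fpfRow, fpfRow_eq_empty_of_forall_not_fpfVisDes hz h, Set.ncard_empty]

lemma fpfVisDes_of_mem_essSet (hz : Function.Involutive z) (h : (i, j) ∈ EssSet (DhatFPF z)) :
    FpfVisDes z i := by
  by_contra hd
  exact h.2.1 (fpfRow_subset_succ hz hd h.1)

end Rows

namespace FInf

variable {z : Perm ℤ} (hz : z ∈ FInf) {i : ℤ}
include hz

lemma pos_of_fpfVisDes (h : FpfVisDes z i) : 0 < i := by
  obtain ⟨-, h⟩ := h
  by_contra! hi
  rcases le_or_gt (i + 1) 0 with hi1 | hi1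
  · have := apply_of_nonpos hz hi1
    have := Theta.sub_one_le (i + 1)
    omega
  · have := apply_pos hz hi1
    omega

lemma apply_succ_mem_fpfRow (h : FpfVisDes z i) : z (i + 1) ∈ fpfRow z i := by
  have hi := pos_of_fpfVisDes hz h
  obtain ⟨-, h⟩ := h
  exact mem_fpfRow.2 ⟨apply_pos hz (by omega), h, by rw [FZ.apply_apply hz.1]; omega⟩

lemma fpfCode_ne_zero (h : FpfVisDes z i) : fpfCode z i ≠ 0 :=
  ((Set.ncard_pos fpfRow_finite).2 ⟨_, apply_succ_mem_fpfRow hz h⟩).ne'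

lemma fpfCode_succ_lt (h : FpfVisDes z i) : fpfCode z (i + 1) < fpfCode z i := by
  have hss : fpfRow z i ∩ Set.Iio (z (i + 1)) ⊂ fpfRow z i :=
    (Set.ssubset_iff_of_subset Set.inter_subset_left).2
      ⟨_, apply_succ_mem_fpfRow hz h, fun hm => lt_irrefl _ (Set.mem_Iio.1 hm.2)⟩
  exact (Set.ncard_le_ncard (fpfRow_succ_subset h) (fpfRow_finite.inter_of_left _)).trans_lt
    (Set.ncard_lt_ncard hss fpfRow_finite)

lemma exists_mem_essSet_of_fpfVisDes (h : FpfVisDes z i) :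
    ∃ j, (i, j) ∈ EssSet (DhatFPF z) := by
  obtain ⟨j, hj, hmax⟩ :=
    Set.exists_max_image _ id fpfRow_finite ⟨_, apply_succ_mem_fpfRow hz h⟩
  have hzj := hmax _ (apply_succ_mem_fpfRow hz h)
  refine ⟨j, hj, fun hj' => ?_, fun hj' => ?_⟩
  · exact (fpfRow_succ_subset h hj').2.not_ge hzj
  · exact (hmax _ hj').not_gt (lt_add_one j)

lemma fst_image_essSet : Prod.fst '' EssSet (DhatFPF z) = {i | FpfVisDes z i} := by
  ext i
  constructor
  · rintro ⟨⟨i, j⟩, hp, rfl⟩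
    exact fpfVisDes_of_mem_essSet (FZ.involutive hz.1) hp
  · intro h
    obtain ⟨j, hj⟩ := exists_mem_essSet_of_fpfVisDes hz h
    exact ⟨(i, j), hj, rfl⟩

theorem fpfVisDes_eq_singleton_iff_fpfCode (n : ℤ) :
    {i : ℤ | FpfVisDes z i} = {n} ↔
      (fpfCode z 1 = 0 ∧
        (∀ i : ℤ, 2 ≤ i → i + 1 ≤ n → fpfCode z i ≤ fpfCode z (i + 1)) ∧
        fpfCode z n ≠ 0 ∧
        (∀ i : ℤ, n < i → fpfCode z i = 0)) := by
  simp only [Set.ext_iff, Set.mem_ofPred_eq, Set.mem_singleton_iff]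
  constructor
  · intro hdes
    refine ⟨fpfCode_eq_zero_of_le_one le_rfl, fun i hi hin => ?_,
      fpfCode_ne_zero hz ((hdes n).2 rfl), fun i hi => ?_⟩
    · exact fpfCode_le_succ (FZ.involutive hz.1) fun hd => by have := (hdes i).1 hd; omega
    · exact fpfCode_eq_zero_of_forall_not_fpfVisDes (FZ.involutive hz.1) fun k hk hd => by
        have := (hdes k).1 hd; omega
  · rintro ⟨-, hmono, hn, hzero⟩ i
    constructor
    · intro hd
      by_contra hin
      rcases lt_or_gt_of_ne hin with hi | hi
      · have hi2 : 2 ≤ i := by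
          by_contra!
          exact fpfCode_ne_zero hz hd (fpfCode_eq_zero_of_le_one (by omega))
        exact (fpfCode_succ_lt hz hd).not_ge (hmono i hi2 hi)
      · exact fpfCode_ne_zero hz hd (hzero i hi)
    · rintro rfl
      by_contra hd
      have := fpfCode_le_succ (FZ.involutive hz.1) hd
      have := hzero (i + 1) (lt_add_one i)
      omega

theorem fpfVisDes_eq_singleton_iff_essSet (n : ℤ) :
    {i : ℤ | FpfVisDes z i} = {n} ↔
      ((EssSet (DhatFPF z)).Nonempty ∧ ∀ p ∈ EssSet (DhatFPF z), p.1 = n) := by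
  rw [← fst_image_essSet hz, Set.eq_singleton_iff_nonempty_unique_mem, Set.image_nonempty,
    Set.forall_mem_image]

end FInf

/-- Indexed by `ℕ` so that `Nat.count` and `Nat.nth` enumerate the cycle minima. -/
def IsCycMin (z : Perm ℤ) (m : ℕ) : Prop := (m : ℤ) < z m

instance (z : Perm ℤ) : DecidablePred (IsCycMin z) := fun m =>
  inferInstanceAs (Decidable ((m : ℤ) < z m))

def cycMinCount (z : Perm ℤ) (x : ℤ) : ℕ := Nat.count (IsCycMin z) x.toNat

/-- The one-line form of `β_min(z)`: the cycle of `z` with the `k`-th smallest minimum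
(counting from `k = 0`) goes to `{2k+1, 2k+2}`, its minimum to `2k+1`. -/
def betaMinFun (z : Perm ℤ) (x : ℤ) : ℤ :=
  if x ≤ 0 then x else 2 * cycMinCount z (cycMin z x) + if x < z x then 1 else 2

section BetaMinFun

variable {z : Perm ℤ} {x : ℤ}

lemma betaMinFun_of_nonpos (h : x ≤ 0) : betaMinFun z x = x := if_pos h

lemma betaMinFun_of_pos (h : 0 < x) : betaMinFun z x =
    2 * cycMinCount z (cycMin z x) + if x < z x then 1 else 2 := if_neg h.not_ge

lemma betaMinFun_pos (h : 0 < x) : 0 < betaMinFun z x := by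
  rw [betaMinFun_of_pos h]
  split_ifs <;> omega

lemma cycMinCount_lt_iff {a b : ℤ} (ha : 0 ≤ a) (hza : a < z a) :
    cycMinCount z a < cycMinCount z b ↔ a < b := by
  constructor
  · intro h
    by_contra! hba
    exact h.not_ge (Nat.count_monotone _ (Int.toNat_le_toNat hba))
  · intro h
    refine Nat.count_strict_mono ?_ (by omega)
    rwa [IsCycMin, Int.toNat_of_nonneg ha]

end BetaMinFun

namespace FZ

variable {z : Perm ℤ} (hz : z ∈ FZ)
include hz

lemma cycMin_lt_apply_cycMin (x : ℤ) : cycMin z x < z (cycMin z x) := by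
  have := apply_ne hz x
  rcases le_or_gt x (z x) with h | h
  · rw [cycMin, min_eq_left h]; omega
  · rwa [cycMin, min_eq_right h.le, apply_apply hz]

lemma cycMin_apply (x : ℤ) : cycMin z (z x) = cycMin z x := by
  rw [cycMin, cycMin, apply_apply hz, min_comm]

lemma eq_or_eq_apply_of_cycMin_eq {x y : ℤ} (h : cycMin z x = cycMin z y) :
    y = x ∨ y = z x := by
  by_contra! hne
  have h1 : z y ≠ x := fun e => hne.2 (by rw [← e, apply_apply hz])
  have h2 : z y ≠ z x := fun e => hne.1 (z.injective e)
  simp only [cycMin] at h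
  omega

end FZ

namespace FInf

variable {z : Perm ℤ} (hz : z ∈ FInf)
include hz

lemma cycMin_pos {x : ℤ} (hx : 0 < x) : 0 < cycMin z x :=
  lt_min hx (apply_pos hz hx)

lemma not_isCycMin_zero : ¬IsCycMin z 0 := by
  have := Theta.apply_nonpos (le_refl (0 : ℤ))
  rw [IsCycMin, Nat.cast_zero, apply_of_nonpos hz le_rfl]
  omega

lemma isCycMin_infinite : {m : ℕ | IsCycMin z m}.Infinite := by
  obtain ⟨B, hB⟩ := FZ.exists_apply_eq_Theta hz.1
  refine Set.infinite_of_forall_exists_gt fun N => ⟨2 * (N + B) + 1, ?_, by omega⟩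
  have hodd : ¬Even ((2 * (N + B) + 1 : ℕ) : ℤ) := by
    rw [Int.not_even_iff_odd]; exact ⟨N + B, by push_cast; ring⟩
  change ((2 * (N + B) + 1 : ℕ) : ℤ) < z ((2 * (N + B) + 1 : ℕ) : ℤ)
  rw [hB _ (by push_cast; omega), Theta.apply_of_odd hodd]
  omega

lemma betaMinFun_lt_iff {x y : ℤ} (hx : 0 < x) (hy : 0 < y) :
    betaMinFun z x < betaMinFun z y ↔
      cycMin z x < cycMin z y ∨ cycMin z x = cycMin z y ∧ x < y := by
  have hmx := cycMin_pos hz hx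
  have hmy := cycMin_pos hz hy
  rw [betaMinFun_of_pos hx, betaMinFun_of_pos hy]
  rcases lt_trichotomy (cycMin z x) (cycMin z y) with h | h | h
  · have := (cycMinCount_lt_iff hmx.le (FZ.cycMin_lt_apply_cycMin hz.1 x)).2 h
    split_ifs <;> omega
  · rcases FZ.eq_or_eq_apply_of_cycMin_eq hz.1 h with rfl | rfl
    · simp
    · have := FZ.apply_ne hz.1 x
      rw [← h, FZ.apply_apply hz.1]
      split_ifs <;> omega
  · have := (cycMinCount_lt_iff hmy.le (FZ.cycMin_lt_apply_cycMin hz.1 y)).2 h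
    split_ifs <;> omega

lemma betaMinFun_injective : Function.Injective (betaMinFun z) := by
  intro x y hxy
  rcases le_or_gt x 0 with hx | hx <;> rcases le_or_gt y 0 with hy | hy
  · rwa [betaMinFun_of_nonpos hx, betaMinFun_of_nonpos hy] at hxy
  · have := betaMinFun_pos (z := z) hy
    rw [betaMinFun_of_nonpos hx] at hxy
    omega
  · have := betaMinFun_pos (z := z) hx
    rw [betaMinFun_of_nonpos hy] at hxy
    omega
  · have h1 := (betaMinFun_lt_iff hz hx hy).not.1 hxy.not_lt
    have h2 := (betaMinFun_lt_iff hz hy hx).not.1 hxy.not_gt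
    omega

lemma betaMinFun_surjective : Function.Surjective (betaMinFun z) := by
  intro t
  rcases le_or_gt t 0 with ht | ht
  · exact ⟨t, betaMinFun_of_nonpos ht⟩
  set c := ((t - 1) / 2).toNat
  have hmin := Nat.nth_mem_of_infinite (isCycMin_infinite hz) c
  set a : ℤ := (Nat.nth (IsCycMin z) c : ℤ)
  have ha : 0 < a := by
    have : Nat.nth (IsCycMin z) c ≠ 0 := fun h0 => not_isCycMin_zero hz (h0 ▸ hmin)
    omega
  have hza : a < z a := hmin
  have hca : cycMinCount z a = c := by
    rw [cycMinCount, Int.toNat_natCast, Nat.count_nth_of_infinite (isCycMin_infinite hz)]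
  have hma : cycMin z a = a := min_eq_left hza.le
  rcases Int.even_or_odd t with ⟨k, rfl⟩ | ⟨k, rfl⟩
  · refine ⟨z a, ?_⟩
    rw [betaMinFun_of_pos (apply_pos hz ha), FZ.cycMin_apply hz.1, hma, hca, FZ.apply_apply hz.1,
      if_neg hza.not_gt]
    omega
  · refine ⟨a, ?_⟩
    rw [betaMinFun_of_pos ha, hma, hca, if_pos hza]
    omega

lemma cycMinCount_add_one {N : ℤ} (hN0 : 0 ≤ N) :
    cycMinCount z (N + 1) = ((Finset.Icc 1 N).filter fun y => y < z y).card := by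
  rw [cycMinCount, Nat.count_eq_card_filter_range]
  have h0 := not_isCycMin_zero hz
  refine Finset.card_nbij' (fun m : ℕ => (m : ℤ)) Int.toNat ?_ ?_ ?_ ?_
  · intro m hm
    simp only [Finset.coe_filter, Finset.mem_range, Set.mem_ofPred_eq] at hm ⊢
    have : m ≠ 0 := by rintro rfl; exact h0 hm.2
    exact ⟨Finset.mem_Icc.2 ⟨by omega, by omega⟩, hm.2⟩
  · intro y hy
    simp only [Finset.coe_filter, Finset.mem_Icc, Finset.mem_range, Set.mem_ofPred_eq] at hy ⊢
    refine ⟨by omega, ?_⟩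
    rw [IsCycMin, Int.toNat_of_nonneg (by omega)]
    exact hy.2
  · intro m _
    simp
  · intro y hy
    simp only [Finset.coe_filter, Finset.mem_Icc, Set.mem_ofPred_eq] at hy
    simp [Int.toNat_of_nonneg (show 0 ≤ y by omega)]

/-- `z` pairs off the cycle minima in `[1, N]` with the other elements of `[1, N]`. -/
lemma two_mul_cycMinCount {N : ℤ} (hN0 : 0 ≤ N) (hN : ∀ y, 0 < y → y ≤ N → z y ≤ N) :
    2 * (cycMinCount z (N + 1) : ℤ) = N := by
  rw [cycMinCount_add_one hz hN0]
  set S := (Finset.Icc 1 N).filter fun y => y < z y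
  set T := (Finset.Icc 1 N).filter fun y => ¬y < z y
  have hTS : T.card = S.card := by
    refine Finset.card_nbij' z z (fun y hy => ?_) (fun y hy => ?_)
      (fun y _ => FZ.apply_apply hz.1 y) (fun y _ => FZ.apply_apply hz.1 y)
    all_goals
      simp only [Finset.coe_filter, Finset.mem_Icc, Set.mem_ofPred_eq, S, T] at hy ⊢
      have := apply_pos hz (show 0 < y by omega)
      have := hN y (by omega) hy.1.2
      have := FZ.apply_ne hz.1 y
      rw [FZ.apply_apply hz.1]
      omega
  have hST : S.card + T.card = (Finset.Icc 1 N).card := Finset.card_filter_add_card_filter_not _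
  rw [Int.card_Icc] at hST
  omega

end FInf

def betaMin {z : Perm ℤ} (hz : z ∈ FInf) : Perm ℤ :=
  Equiv.ofBijective (betaMinFun z) ⟨FInf.betaMinFun_injective hz, FInf.betaMinFun_surjective hz⟩

lemma betaMin_apply {z : Perm ℤ} (hz : z ∈ FInf) (x : ℤ) : betaMin hz x = betaMinFun z x :=
  rfl

lemma IsLexMinAtom.unique {z w w' : Perm ℤ} (h : IsLexMinAtom z w) (h' : IsLexMinAtom z w') :
    w = w' := by
  rcases h.2 w' h'.1 with rfl | ⟨k, hk, hlt, hagree⟩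
  · rfl
  rcases h'.2 w h.1 with rfl | ⟨k', hk', hlt', hagree'⟩
  · rfl
  exfalso
  rcases lt_trichotomy k k' with hkk | rfl | hkk
  · have := hagree' k hk hkk
    omega
  · omega
  · have := hagree k' hk' hkk
    omega

namespace FInf

variable {z : Perm ℤ} (hz : z ∈ FInf)
include hz

lemma betaMin_of_nonpos {x : ℤ} (h : x ≤ 0) : betaMin hz x = x := betaMinFun_of_nonpos h

lemma betaMin_lt_iff {x y : ℤ} (hx : 0 < x) (hy : 0 < y) :
    betaMin hz x < betaMin hz y ↔ cycMin z x < cycMin z y ∨ cycMin z x = cycMin z y ∧ x < y :=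
  betaMinFun_lt_iff hz hx hy

lemma pos_of_betaMin_lt {x y : ℤ} (hxy : x < y) (h : betaMin hz y < betaMin hz x) : 0 < x := by
  by_contra! hx
  rw [betaMin_of_nonpos hz hx] at h
  rcases le_or_gt y 0 with hy | hy
  · rw [betaMin_of_nonpos hz hy] at h
    omega
  · have := betaMinFun_pos (z := z) hy
    rw [betaMin_apply] at h
    omega

lemma betaMin_apply_apply (x : ℤ) : betaMin hz (z x) = Theta (betaMin hz x) := by
  rcases le_or_gt x 0 with hx | hx
  · rw [betaMin_of_nonpos hz hx, apply_of_nonpos hz hx,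
      betaMin_of_nonpos hz (Theta.apply_nonpos hx)]
  · have hne := FZ.apply_ne hz.1 x
    rw [betaMin_apply, betaMin_apply, betaMinFun_of_pos hx, betaMinFun_of_pos (apply_pos hz hx),
      FZ.cycMin_apply hz.1, FZ.apply_apply hz.1]
    by_cases hmin : x < z x
    · rw [if_neg (by omega), if_pos hmin, Theta.apply_two_mul_add_one]
    · rw [if_pos (by omega), if_neg hmin, Theta.apply_two_mul_add_two]

lemma eq_conj_betaMin : z = (betaMin hz)⁻¹ * Theta * betaMin hz := by
  ext x
  simp [Perm.mul_apply, ← betaMin_apply_apply hz]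

lemma betaMin_eq_self_of_le {B : ℕ} (hB : ∀ x : ℤ, B ≤ x → z x = Theta x) {x : ℤ}
    (hx : B + 2 ≤ x) : betaMin hz x = x := by
  have hcount : ∀ N : ℤ, B ≤ N → Even N → 2 * (cycMinCount z (N + 1) : ℤ) = N :=
    fun N hBN hN => two_mul_cycMinCount hz (by omega) fun y _ hyN =>
      FZ.apply_le_of_even hz.1 hB hBN hN hyN
  rw [betaMin_apply, betaMinFun_of_pos (by omega)]
  rcases Int.even_or_odd x with hev | ⟨k, rfl⟩
  · have hzx : z x = x - 1 := by rw [hB x (by omega), Theta.apply_of_even hev]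
    have hm : cycMin z x = x - 2 + 1 := by rw [cycMin, hzx]; omega
    have := hcount (x - 2) (by omega) (by simpa [Int.even_sub] using hev)
    rw [hm, if_neg (by omega)]
    omega
  · have hzx : z (2 * k + 1) = 2 * k + 2 := by
      rw [hB _ (by omega), Theta.apply_two_mul_add_one]
    have hm : cycMin z (2 * k + 1) = 2 * k + 1 := by rw [cycMin, hzx]; omega
    have := hcount (2 * k) (by omega) (even_two_mul k)
    rw [hm, if_pos (by omega)]
    omega

lemma betaMin_mem_SInf : betaMin hz ∈ SInf := by
  obtain ⟨B, hB⟩ := FZ.exists_apply_eq_Theta hz.1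
  have hpos : ∀ x, betaMin hz x ≠ x → 0 < x := fun x hx => by
    by_contra! h
    exact hx (betaMin_of_nonpos hz h)
  refine ⟨(Set.finite_Icc 1 (B + 1 : ℤ)).subset fun x hx => ?_, hpos⟩
  have := hpos x hx
  have : x < B + 2 := by
    by_contra! h
    exact hx (betaMin_eq_self_of_le hz hB h)
  exact Set.mem_Icc.2 ⟨by omega, by omega⟩

lemma apply_lt_of_mem_invSet_betaMin {x y : ℤ} (h : (x, y) ∈ InvSet (betaMin hz)) :
    z y < x ∧ z y < z x := by
  obtain ⟨hxy, hinv⟩ := h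
  dsimp only at hxy hinv
  have hx := pos_of_betaMin_lt hz hxy hinv
  have := (betaMin_lt_iff hz (hx.trans hxy) hx).1 hinv
  simp only [cycMin] at this
  omega

/-- An inversion `(x, y)` of `β_min(z)` gives the inversion `(x, y)` or `(z y, x)` of `v`; in the
second case `v x < v y` forces `v x < Θ (v y) = v (z y)`. -/
lemma lenZ_betaMin_le {v : Perm ℤ} (hv : v ∈ SInf) (hvz : ∀ x, v (z x) = Theta (v x)) :
    lenZ (betaMin hz) ≤ lenZ v := by
  refine Set.ncard_le_ncard_of_injOn (fun p => if v p.2 < v p.1 then p else (z p.2, p.1))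
    ?_ ?_ (SInf.invSet_finite hv)
  · rintro ⟨x, y⟩ hp
    obtain ⟨hzyx, hzyzx⟩ := apply_lt_of_mem_invSet_betaMin hz hp
    have hxy : x < y := hp.1
    dsimp only
    split_ifs with hvyx
    · exact ⟨hxy, hvyx⟩
    · refine ⟨hzyx, ?_⟩
      have h1 : v x ≠ v y := v.injective.ne hxy.ne
      have h2 : v x ≠ v (z y) := v.injective.ne hzyx.ne'
      have := Theta.sub_one_le (v y)
      dsimp only
      rw [hvz] at h2 ⊢
      omega
  · rintro ⟨x, y⟩ hp ⟨x', y'⟩ hp' heq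
    have h := apply_lt_of_mem_invSet_betaMin hz hp
    have h' := apply_lt_of_mem_invSet_betaMin hz hp'
    dsimp only at heq
    split_ifs at heq <;> simp only [Prod.mk.injEq] at heq
    · rw [heq.1, heq.2]
    · obtain ⟨rfl, rfl⟩ := heq
      omega
    · obtain ⟨rfl, rfl⟩ := heq
      omega
    · rw [heq.2, z.injective heq.1]

/-- If `v` first differs from `β_min(z)` at `k`, each `y > 0` with `β_min(z) y < β_min(z) k` lies
before `k` or is the partner of a cycle minimum before `k`, so `v y = β_min(z) y` and `v k` cannot
take any of these values. -/
lemma eq_betaMin_or_betaMin_lt {v : Perm ℤ} (hv : v ∈ SInf)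
    (hvz : ∀ x, v (z x) = Theta (v x)) :
    v = betaMin hz ∨
      ∃ k, 0 < k ∧ betaMin hz k < v k ∧ ∀ j, 0 < j → j < k → betaMin hz j = v j := by
  by_cases hall : ∀ k, 0 < k → v k = betaMin hz k
  · left
    ext x
    rcases le_or_gt x 0 with hx | hx
    · rw [SInf.apply_of_nonpos hv hx, betaMin_of_nonpos hz hx]
    · rw [hall x hx]
  right
  push Not at hall
  obtain ⟨k, ⟨hk0, hk⟩, hleast⟩ := Int.exists_least_of_bdd ⟨0, fun j hj => hj.1.le⟩ hall
  have hagree : ∀ j, 0 < j → j < k → v j = betaMin hz j := fun j hj hjk => by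
    by_contra h
    exact (hleast j ⟨hj, h⟩).not_gt hjk
  have hbelow : ∀ y, 0 < y → betaMin hz y < betaMin hz k → v y = betaMin hz y := by
    intro y hy hlt
    rcases lt_trichotomy y k with hyk | rfl | hky
    · exact hagree y hy hyk
    · exact absurd hlt (lt_irrefl _)
    · have hm := (betaMin_lt_iff hz hy hk0).1 hlt
      simp only [cycMin] at hm
      rw [← FZ.apply_apply hz.1 y, hvz, hagree _ (apply_pos hz hy) (by omega),
        ← betaMin_apply_apply hz]
  refine ⟨k, hk0, ?_, fun j hj hjk => (hagree j hj hjk).symm⟩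
  by_contra! hle
  set y := (betaMin hz).symm (v k)
  have hy : betaMin hz y = v k := (betaMin hz).apply_symm_apply _
  have hy0 : 0 < y := by
    by_contra! h
    have := SInf.apply_pos hv hk0
    rw [betaMin_of_nonpos hz h] at hy
    omega
  have hvy := hbelow y hy0 (hy ▸ lt_of_le_of_ne hle hk)
  rw [hy] at hvy
  have hyk := v.injective hvy
  rw [hyk] at hy
  exact hk hy.symm

lemma betaMin_mem_AFPF : betaMin hz ∈ AFPF z :=
  ⟨betaMin_mem_SInf hz, eq_conj_betaMin hz, fun _ hv hvz =>
    lenZ_betaMin_le hz hv (apply_apply_of_eq_conj hvz)⟩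

lemma isLexMinAtom_betaMin : IsLexMinAtom z (betaMin hz) :=
  ⟨betaMin_mem_AFPF hz, fun _ hv =>
    eq_betaMin_or_betaMin_lt hz hv.1 (apply_apply_of_eq_conj hv.2.1)⟩

lemma fpfVisDes_iff_betaMin_lt (i : ℤ) : FpfVisDes z i ↔ betaMin hz (i + 1) < betaMin hz i := by
  constructor
  · intro h
    have hi := pos_of_fpfVisDes hz h
    exact (betaMin_lt_iff hz (by omega) hi).2 (Or.inl (fpfVisDes_iff_cycMin_lt.1 h))
  · intro h
    have hi := pos_of_betaMin_lt hz (lt_add_one i) h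
    have := (betaMin_lt_iff hz (by omega) hi).1 h
    exact fpfVisDes_iff_cycMin_lt.2 (this.resolve_right (by omega))

lemma isNGrassmannian_betaMin_iff (n : ℤ) :
    IsNGrassmannian n (betaMin hz) ↔ {i : ℤ | FpfVisDes z i} = {n} := by
  have hne : ∀ i, betaMin hz i ≠ betaMin hz (i + 1) := fun i =>
    (betaMin hz).injective.ne (by omega)
  simp only [IsNGrassmannian, Set.ext_iff, Set.mem_ofPred_eq, Set.mem_singleton_iff,
    fpfVisDes_iff_betaMin_lt hz]
  constructor
  · rintro ⟨hinc, hn⟩ i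
    refine ⟨fun hi => ?_, by rintro rfl; exact hn⟩
    by_contra hin
    have := hinc i (pos_of_betaMin_lt hz (lt_add_one i) hi) hin
    omega
  · intro h
    refine ⟨fun i _ hin => ?_, (h n).2 rfl⟩
    have := mt (h i).1 hin
    have := hne i
    omega

theorem fpfVisDes_eq_singleton_iff_isLexMinAtom (n : ℤ) :
    {i : ℤ | FpfVisDes z i} = {n} ↔ ∃ w, IsLexMinAtom z w ∧ IsNGrassmannian n w := by
  rw [← isNGrassmannian_betaMin_iff hz]
  constructor
  · exact fun h => ⟨_, isLexMinAtom_betaMin hz, h⟩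
  · rintro ⟨w, hw, hgr⟩
    rwa [hw.unique (isLexMinAtom_betaMin hz)] at hgr

end FInf

theorem fpf_grassmannian_tfae_general (z : Equiv.Perm ℤ) (hz : z ∈ FInf) (n : ℤ) :
    (({i : ℤ | FpfVisDes z i} = {n}) ↔
      (fpfCode z 1 = 0 ∧
        (∀ i : ℤ, 2 ≤ i → i + 1 ≤ n → fpfCode z i ≤ fpfCode z (i + 1)) ∧
        fpfCode z n ≠ 0 ∧
        (∀ i : ℤ, n < i → fpfCode z i = 0))) ∧
    (({i : ℤ | FpfVisDes z i} = {n}) ↔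
      ((EssSet (DhatFPF z)).Nonempty ∧ ∀ p ∈ EssSet (DhatFPF z), p.1 = n)) ∧
    (({i : ℤ | FpfVisDes z i} = {n}) ↔
      (∃ w : Equiv.Perm ℤ, IsLexMinAtom z w ∧ IsNGrassmannian n w)) :=
  ⟨FInf.fpfVisDes_eq_singleton_iff_fpfCode hz n, FInf.fpfVisDes_eq_singleton_iff_essSet hz n,
    FInf.fpfVisDes_eq_singleton_iff_isLexMinAtom hz n⟩

/-- four equivalent characterizations of the elements of `F_∞`
whose unique FPF-visible descent is `n`. -/
theorem fpf_grassmannian_tfae (z : Equiv.Perm ℤ) (hz : z ∈ FInf) (n : ℤ) (hn : 0 < n) :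
    (({i : ℤ | FpfVisDes z i} = {n}) ↔
      (fpfCode z 1 = 0 ∧
        (∀ i : ℤ, 2 ≤ i → i + 1 ≤ n → fpfCode z i ≤ fpfCode z (i + 1)) ∧
        fpfCode z n ≠ 0 ∧
        (∀ i : ℤ, n < i → fpfCode z i = 0))) ∧
    (({i : ℤ | FpfVisDes z i} = {n}) ↔
      ((EssSet (DhatFPF z)).Nonempty ∧ ∀ p ∈ EssSet (DhatFPF z), p.1 = n)) ∧
    (({i : ℤ | FpfVisDes z i} = {n}) ↔
      (∃ w : Equiv.Perm ℤ, IsLexMinAtom z w ∧ IsNGrassmannian n w)) :=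
  fpf_grassmannian_tfae_general z hz n
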